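/- arXiv:1107.2248 — 2 statements merged into one kernel-verified Lean document; each statement's English description precedes it below -/
import Mathlib

section
/- For any integer k ≥ 1, any finite multiset A of non-negative reals, and any non-negative real b, Ψ_k(A ∪ {b}) ≤ (Ψ_k({b})^{1/k} + Ψ_k(A)^{1/k})^k. -/
/-- `hpoly k A` is the complete homogeneous sum of degree `k` in the elements
of the list `A` (sum of all monomials of total degree `k`). -/
noncomputable def hpoly : ℕ → List ℝ → ℝ
  | 0, _ => 1
  | _+1, [] => 0
  | k+1, a :: A => a * hpoly k (a :: A) + hpoly (k+1) A
termination_by k A => (k, A.length)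

/-- `Psi k A = k! ·` (sum of all monomials of total degree `k` in the elements of `A`). -/
noncomputable def Psi (k : ℕ) (A : List ℝ) : ℝ := (Nat.factorial k : ℝ) * hpoly k A

/-!
The `j`-th moment of `S = ∑_{a ∈ A} a E_a`, with independent standard exponential variables
`E_a` (so `E[E_a ^ i] = i!`), is `Ψ_j(A)`: expanding `E[(a E + S')^j]` binomially gives exactly
the recursion of `Ψ` in one new element. Hence `Ψ_k(A ∪ {b}) = E[(b E + S)^k]`, and in its
binomial expansion Lyapunov's inequality `E[X^i] ≤ E[X^k]^(i/k)`, applied to `X = b E` and to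
`X = S`, bounds each term by the matching term of `(Ψ_k({b})^(1/k) + Ψ_k(A)^(1/k))^k`.
-/

open MeasureTheory ProbabilityTheory Real Finset
open scoped Nat

theorem hpoly_cons (k : ℕ) (b : ℝ) (A : List ℝ) :
    hpoly k (b :: A) = ∑ i ∈ range (k + 1), b ^ i * hpoly (k - i) A := by
  induction k with
  | zero => simp [hpoly]
  | succ k ih =>
    rw [hpoly, ih, mul_sum, sum_range_succ' (fun i => b ^ i * hpoly (k + 1 - i) A)]
    simp only [pow_zero, one_mul, Nat.sub_zero, Nat.succ_sub_succ, pow_succ', mul_assoc]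

theorem hpoly_nil (k : ℕ) : hpoly k [] = 0 ^ k := by
  cases k <;> simp [hpoly]

theorem Psi_nil (k : ℕ) : Psi k [] = 0 ^ k := by
  rw [Psi, hpoly_nil]
  cases k <;> simp

theorem hpoly_singleton (k : ℕ) (b : ℝ) : hpoly k [b] = b ^ k := by
  induction k with
  | zero => simp [hpoly]
  | succ k ih => rw [hpoly, ih, hpoly_nil, pow_succ]; ring

theorem Psi_singleton (k : ℕ) (b : ℝ) : Psi k [b] = k ! * b ^ k := by
  rw [Psi, hpoly_singleton]

theorem Psi_cons (k : ℕ) (b : ℝ) (A : List ℝ) :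
    Psi k (b :: A) = ∑ i ∈ range (k + 1), (k.choose i : ℝ) * Psi i [b] * Psi (k - i) A := by
  rw [Psi, hpoly_cons, mul_sum]
  refine sum_congr rfl fun i hi => ?_
  have hfact : (k ! : ℝ) = k.choose i * i ! * (k - i)! := by
    exact_mod_cast
      (Nat.choose_mul_factorial_mul_factorial (Nat.le_of_lt_succ (mem_range.1 hi))).symm
  rw [Psi_singleton, Psi, hfact]
  ring

structure HasMoments (μ : Measure ℝ) (m : ℕ → ℝ) : Prop where
  isProbabilityMeasure : IsProbabilityMeasure μ
  ae_nonneg : ∀ᵐ x ∂μ, 0 ≤ x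
  integrable_pow (j : ℕ) : Integrable (fun x => x ^ j) μ
  integral_pow (j : ℕ) : ∫ x, x ^ j ∂μ = m j

theorem hasMoments_dirac {c : ℝ} (hc : 0 ≤ c) : HasMoments (Measure.dirac c) (c ^ ·) where
  isProbabilityMeasure := inferInstance
  ae_nonneg := (ae_dirac_iff measurableSet_Ici).2 hc
  integrable_pow _ := integrable_dirac (by simp)
  integral_pow _ := integral_dirac _ _

namespace HasMoments

variable {μ ν : Measure ℝ} {m n : ℕ → ℝ}

theorem nonneg (h : HasMoments μ m) (j : ℕ) : 0 ≤ m j :=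
  h.integral_pow j ▸ integral_nonneg_of_ae (h.ae_nonneg.mono fun _ hx => pow_nonneg hx j)

/-- Lyapunov's inequality `‖X‖_j ≤ ‖X‖_k`, via Jensen for `t ↦ t ^ (k / j)`. -/

theorem le_rpow (h : HasMoments μ m) {j k : ℕ} (hjk : j ≤ k) :
    m j ≤ m k ^ ((j : ℝ) / k) := by
  have := h.isProbabilityMeasure
  rcases Nat.eq_zero_or_pos j with rfl | hj
  · simp [← h.integral_pow]
  have hj' : (0 : ℝ) < j := by exact_mod_cast hj
  have hk' : (0 : ℝ) < k := by exact_mod_cast hj.trans_le hjk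
  have hp : (1 : ℝ) ≤ k / j := by rw [one_le_div hj']; exact_mod_cast hjk
  have hpow : ∀ᵐ x ∂μ, (x ^ j) ^ ((k : ℝ) / j) = x ^ k := h.ae_nonneg.mono fun x hx => by
    rw [← rpow_natCast x j, ← rpow_mul hx, mul_div_cancel₀ _ hj'.ne', rpow_natCast]
  have jensen := (convexOn_rpow hp).map_integral_le
    (continuous_rpow_const (by positivity)).continuousOn isClosed_Ici
    (h.ae_nonneg.mono fun x hx => pow_nonneg hx j) (h.integrable_pow j)
    ((h.integrable_pow k).congr (hpow.mono fun _ hx => hx.symm))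
  rw [integral_congr_ae hpow, h.integral_pow, h.integral_pow] at jensen
  calc m j = (m j ^ ((k : ℝ) / j)) ^ ((j : ℝ) / k) := by
        rw [← rpow_mul (h.nonneg j), div_mul_div_cancel₀ hj'.ne', div_self hk'.ne', rpow_one]
    _ ≤ m k ^ ((j : ℝ) / k) := rpow_le_rpow (rpow_nonneg (h.nonneg j) _) jensen (by positivity)

/-- By `HasMoments.conv` the left side is the `k`-th moment of `ν ∗ μ`: this is Minkowski's
inequality in `L^k`, proved termwise from `le_rpow`. -/

theorem sum_choose_mul_le (hν : HasMoments ν m) (hμ : HasMoments μ n) (k : ℕ) :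
    ∑ i ∈ range (k + 1), (k.choose i : ℝ) * m i * n (k - i) ≤
      (m k ^ ((1 : ℝ) / k) + n k ^ ((1 : ℝ) / k)) ^ k := by
  rw [add_pow]
  refine sum_le_sum fun i hi => ?_
  have hik : i ≤ k := Nat.le_of_lt_succ (mem_range.1 hi)
  have hm := hν.le_rpow hik
  have hn := hμ.le_rpow (Nat.sub_le k i)
  calc (k.choose i : ℝ) * m i * n (k - i)
      ≤ k.choose i * m k ^ ((i : ℝ) / k) * n k ^ (((k - i : ℕ) : ℝ) / k) := by
        gcongr
        exacts [hμ.nonneg _, mul_nonneg (Nat.cast_nonneg _) (rpow_nonneg (hν.nonneg k) _)]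
    _ = (m k ^ ((1 : ℝ) / k)) ^ i * (n k ^ ((1 : ℝ) / k)) ^ (k - i) * k.choose i := by
        rw [← rpow_natCast (m k ^ _), ← rpow_mul (hν.nonneg k), ← rpow_natCast (n k ^ _),
          ← rpow_mul (hμ.nonneg k), one_div_mul_eq_div, one_div_mul_eq_div]
        ring

theorem map_const_mul (h : HasMoments μ m) {a : ℝ} (ha : 0 ≤ a) :
    HasMoments (μ.map (a * ·)) (fun j => a ^ j * m j) := by
  have := h.isProbabilityMeasure
  have hmeas : Measurable (a * · : ℝ → ℝ) := measurable_const_mul a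
  refine ⟨Measure.isProbabilityMeasure_map hmeas.aemeasurable, ?_, fun j => ?_, fun j => ?_⟩
  · exact (ae_map_iff hmeas.aemeasurable measurableSet_Ici).2
      (h.ae_nonneg.mono fun x hx => mul_nonneg ha hx)
  · rw [integrable_map_measure (by fun_prop) hmeas.aemeasurable]
    simpa [Function.comp_def, mul_pow] using (h.integrable_pow j).const_mul (a ^ j)
  · rw [integral_map hmeas.aemeasurable (by fun_prop)]
    simp [mul_pow, integral_const_mul, h.integral_pow]

theorem conv (hν : HasMoments ν m) (hμ : HasMoments μ n) :
    HasMoments (ν ∗ μ)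
      (fun j => ∑ i ∈ range (j + 1), (j.choose i : ℝ) * m i * n (j - i)) := by
  have := hν.isProbabilityMeasure
  have := hμ.isProbabilityMeasure
  have hadd : Measurable fun p : ℝ × ℝ => p.1 + p.2 := measurable_fst.add measurable_snd
  have hexp (j : ℕ) (p : ℝ × ℝ) :
      (p.1 + p.2) ^ j = ∑ i ∈ range (j + 1), (j.choose i * p.1 ^ i) * p.2 ^ (j - i) := by
    rw [add_pow]; exact sum_congr rfl fun i _ => by ring
  have hterm (j i : ℕ) :
      Integrable (fun p : ℝ × ℝ => (j.choose i * p.1 ^ i) * p.2 ^ (j - i)) (ν.prod μ) :=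
    ((hν.integrable_pow i).const_mul _).mul_prod (hμ.integrable_pow (j - i))
  refine ⟨inferInstance, ?_, fun j => ?_, fun j => ?_⟩
  · rw [Measure.conv, ae_map_iff hadd.aemeasurable measurableSet_Ici]
    filter_upwards [Measure.quasiMeasurePreserving_fst.ae hν.ae_nonneg,
      Measure.quasiMeasurePreserving_snd.ae hμ.ae_nonneg] with p h1 h2
    exact add_nonneg h1 h2
  · rw [Measure.conv, integrable_map_measure (by fun_prop) hadd.aemeasurable]
    simpa only [Function.comp_def, hexp] using integrable_finsetSum _ fun i _ => hterm j i
  · rw [Measure.conv, integral_map hadd.aemeasurable (by fun_prop)]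
    simp only [hexp]
    rw [integral_finsetSum _ fun i _ => hterm j i]
    refine sum_congr rfl fun i _ => ?_
    rw [integral_prod_mul (f := fun x => (j.choose i : ℝ) * x ^ i) (g := (· ^ (j - i))),
      integral_const_mul, hν.integral_pow, hμ.integral_pow]

end HasMoments

theorem expMeasure_one_eq :
    expMeasure 1 =
      (volume.restrict (Set.Ici 0)).withDensity fun x => ENNReal.ofReal (exp (-x)) := by
  rw [← withDensity_indicator measurableSet_Ici, expMeasure, gammaMeasure]
  congr 1
  funext x
  by_cases hx : 0 ≤ x <;> simp [gammaPDF_eq, hx, Set.indicator]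

theorem hasMoments_expMeasure_one : HasMoments (expMeasure 1) (fun j => j !) := by
  have hdens : Measurable fun x : ℝ => ENNReal.ofReal (exp (-x)) := by fun_prop
  have hfin : ∀ᵐ x ∂(volume.restrict (Set.Ici (0 : ℝ))), ENNReal.ofReal (exp (-x)) < ⊤ :=
    ae_of_all _ fun _ => ENNReal.ofReal_lt_top
  have hsmul (j : ℕ) (x : ℝ) :
      (ENNReal.ofReal (exp (-x))).toReal • x ^ j = exp (-x) * x ^ (((j : ℝ) + 1) - 1) := by
    simp [exp_nonneg, rpow_natCast]
  refine ⟨isProbabilityMeasure_expMeasure one_pos, ?_, fun j => ?_, fun j => ?_⟩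
  · rw [expMeasure_one_eq]
    exact (withDensity_absolutelyContinuous _ _).ae_le (ae_restrict_mem measurableSet_Ici)
  · rw [expMeasure_one_eq, integrable_withDensity_iff_integrable_smul' hdens hfin]
    simp only [hsmul]
    exact (integrableOn_Ici_iff_integrableOn_Ioi (by simp)).2
      (GammaIntegral_convergent (by positivity))
  · rw [expMeasure_one_eq, integral_withDensity_eq_integral_toReal_smul hdens hfin]
    simp only [hsmul]
    rw [integral_Ici_eq_integral_Ioi, ← Gamma_eq_integral (by positivity), Gamma_nat_eq_factorial]

theorem exists_hasMoments_Psi (A : List ℝ) (hA : ∀ x ∈ A, 0 ≤ x) :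
    ∃ μ : Measure ℝ, HasMoments μ (Psi · A) := by
  induction A with
  | nil => exact ⟨_, by simpa only [Psi_nil] using hasMoments_dirac le_rfl⟩
  | cons a A ih =>
    obtain ⟨μ, hμ⟩ := ih fun x hx => hA x (List.mem_cons_of_mem a hx)
    have ha : HasMoments ((expMeasure 1).map (a * ·)) (Psi · [a]) := by
      convert hasMoments_expMeasure_one.map_const_mul (hA a List.mem_cons_self) using 2
      rw [Psi_singleton, mul_comm]
    exact ⟨_, by simpa only [← Psi_cons] using ha.conv hμ⟩

theorem stmt5_general (k : ℕ) (A : List ℝ) (hA : ∀ x ∈ A, 0 ≤ x)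
    (b : ℝ) (hb : 0 ≤ b) :
    Psi k (b :: A) ≤ (Psi k [b] ^ ((1 : ℝ) / k) + Psi k A ^ ((1 : ℝ) / k)) ^ k := by
  obtain ⟨ν, hν⟩ := exists_hasMoments_Psi [b] (by simpa using hb)
  obtain ⟨μ, hμ⟩ := exists_hasMoments_Psi A hA
  rw [Psi_cons]
  exact hν.sum_choose_mul_le hμ k

theorem stmt5 (k : ℕ) (hk : 1 ≤ k) (A : List ℝ) (hA : ∀ x ∈ A, 0 ≤ x)
    (b : ℝ) (hb : 0 ≤ b) :
    Psi k (b :: A) ≤ (Psi k [b] ^ ((1 : ℝ) / k) + Psi k A ^ ((1 : ℝ) / k)) ^ k :=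
  stmt5_general k A hA b hb
end

section
/- Any ρ-approximate pure Nash equilibrium of a Ψ-game of degree d is a (d!·ρ)-approximate pure Nash equilibrium of the corresponding weighted congestion game with polynomial latency functions of maximum degree d. -/
open Finset

variable {n : ℕ} {E : Type*} [Fintype E] [DecidableEq E]

/-- `PsiW w k P = k! ·` (sum of all monomials of total degree `k` in the
weights of the players in `P`). -/
noncomputable def PsiW (w : Fin n → ℝ) (k : ℕ) (P : Finset (Fin n)) : ℝ :=
  (Nat.factorial k : ℝ) * ∑ m ∈ P.sym k, ((m : Multiset (Fin n)).map w).prod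

/-- A weighted congestion game with `n` players, resources `E`, and polynomial
latency functions of maximum degree `d` with non-negative coefficients
`a e k` (for `k ≤ d`). The same data also describes the corresponding Ψ-game. -/
structure WCGame (n : ℕ) (E : Type*) [Fintype E] (d : ℕ) where
  /-- weights of the players -/
  w : Fin n → ℝ
  w_pos : ∀ u, 0 < w u
  /-- strategy sets: nonempty collections of nonempty sets of resources -/
  strat : Fin n → Finset (Finset E)
  strat_ne : ∀ u, (strat u).Nonempty
  strat_mem_ne : ∀ u, ∀ s ∈ strat u, s.Nonempty
  /-- coefficients of the latency functions -/
  a : E → ℕ → ℝ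
  a_nonneg : ∀ e k, 0 ≤ a e k

namespace WCGame

variable {d : ℕ} (G : WCGame n E d)

/-- A state assigns a strategy to every player. -/
def IsState (S : Fin n → Finset E) : Prop := ∀ u, S u ∈ G.strat u

/-- The set of players using resource `e` in state `S`. -/
def users (S : Fin n → Finset E) (e : E) : Finset (Fin n) :=
  univ.filter fun u => e ∈ S u

/-- The cost of player `u` in the weighted congestion game. -/
noncomputable def cost (S : Fin n → Finset E) (u : Fin n) : ℝ :=
  G.w u * ∑ e ∈ S u, ∑ k ∈ Finset.range (d + 1),
    G.a e k * ((users S e).sum G.w) ^ k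

/-- The cost of player `u` in the corresponding Ψ-game. -/
noncomputable def pcost (S : Fin n → Finset E) (u : Fin n) : ℝ :=
  G.w u * ∑ e ∈ S u, ∑ k ∈ Finset.range (d + 1),
    G.a e k * PsiW G.w k (users S e)

/-- The potential of the subgame induced by the players in `C`. -/
noncomputable def potOn (C : Finset (Fin n)) (S : Fin n → Finset E) : ℝ :=
  ∑ e : E, ∑ k ∈ Finset.range (d + 1),
    G.a e k / (k + 1) * PsiW G.w (k + 1) (users S e ∩ C)

/-- The potential function of the Ψ-game. -/
noncomputable def pot (S : Fin n → Finset E) : ℝ := G.potOn univ S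

end WCGame

theorem Multiset.countPerms_pos {α : Type*} [DecidableEq α] (m : Multiset α) :
    0 < m.countPerms :=
  Nat.multinomial_pos _ _

theorem Multiset.countPerms_le_factorial_card {α : Type*} [DecidableEq α] (m : Multiset α) :
    m.countPerms ≤ (Multiset.card m).factorial := by
  have hcard : (m.toFinsupp.sum fun _ => id) = Multiset.card m := by
    rw [← Finsupp.card_toMultiset, Multiset.toFinsupp_toMultiset]
  rw [Multiset.countPerms, Finsupp.multinomial, hcard]
  exact Nat.div_le_self _ _

section PsiW

variable {w : Fin n → ℝ}

/-- By the multinomial theorem, `(P.sum w)^k` weights the monomial `m` by its number of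
permutations, which lies between `1` and `k!`. -/
lemma pow_sum_le_PsiW (hw : ∀ u, 0 ≤ w u) (k : ℕ) (P : Finset (Fin n)) :
    P.sum w ^ k ≤ PsiW w k P := by
  rw [Finset.sum_pow, PsiW, Finset.mul_sum]
  refine Finset.sum_le_sum fun m _ =>
    mul_le_mul_of_nonneg_right ?_ (Multiset.prod_map_nonneg fun u _ => hw u)
  exact_mod_cast m.2 ▸ m.val.countPerms_le_factorial_card

lemma PsiW_le_factorial_mul_pow_sum (hw : ∀ u, 0 ≤ w u) (k : ℕ) (P : Finset (Fin n)) :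
    PsiW w k P ≤ k.factorial * P.sum w ^ k := by
  rw [Finset.sum_pow, PsiW]
  gcongr with m
  refine le_mul_of_one_le_left (Multiset.prod_map_nonneg fun u _ => hw u) ?_
  exact_mod_cast m.val.countPerms_pos

end PsiW

namespace WCGame

variable {d : ℕ} (G : WCGame n E d)

lemma cost_le_pcost (S : Fin n → Finset E) (u : Fin n) : G.cost S u ≤ G.pcost S u := by
  unfold cost pcost
  gcongr with e _ k
  · exact (G.w_pos u).le
  · exact G.a_nonneg e k
  · exact pow_sum_le_PsiW (fun v => (G.w_pos v).le) k _

lemma pcost_le_factorial_mul_cost (S : Fin n → Finset E) (u : Fin n) :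
    G.pcost S u ≤ d.factorial * G.cost S u := by
  calc G.pcost S u
      ≤ G.w u * ∑ e ∈ S u, ∑ k ∈ Finset.range (d + 1),
          G.a e k * (d.factorial * ((users S e).sum G.w) ^ k) := by
        unfold pcost
        gcongr with e _ k hk
        · exact (G.w_pos u).le
        · exact G.a_nonneg e k
        · refine (PsiW_le_factorial_mul_pow_sum (fun v => (G.w_pos v).le) k _).trans ?_
          gcongr
          · exact pow_nonneg (Finset.sum_nonneg fun v _ => (G.w_pos v).le) k
          · exact Nat.lt_succ_iff.1 (Finset.mem_range.1 hk)
    _ = d.factorial * G.cost S u := by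
        simp only [cost, Finset.mul_sum]
        exact Finset.sum_congr rfl fun e _ => Finset.sum_congr rfl fun k _ => by ring

end WCGame

theorem stmt13_general {n : ℕ} {E : Type*} [Fintype E] [DecidableEq E] {d : ℕ}
    (G : WCGame n E d) (ρ : ℝ) (hρ : 1 ≤ ρ)
    (S : Fin n → Finset E)
    (heq : ∀ u : Fin n, ∀ s' ∈ G.strat u,
      G.pcost S u ≤ ρ * G.pcost (Function.update S u s') u) :
    ∀ u : Fin n, ∀ s' ∈ G.strat u,
      G.cost S u ≤ (Nat.factorial d : ℝ) * ρ * G.cost (Function.update S u s') u := by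
  intro u s' hs'
  calc G.cost S u ≤ G.pcost S u := G.cost_le_pcost S u
    _ ≤ ρ * G.pcost (Function.update S u s') u := heq u s' hs'
    _ ≤ ρ * ((Nat.factorial d : ℝ) * G.cost (Function.update S u s') u) :=
        mul_le_mul_of_nonneg_left (G.pcost_le_factorial_mul_cost _ u) (by linarith)
    _ = (Nat.factorial d : ℝ) * ρ * G.cost (Function.update S u s') u := by ring

theorem stmt13 {n : ℕ} {E : Type*} [Fintype E] [DecidableEq E] {d : ℕ}
    (G : WCGame n E d) (ρ : ℝ) (hρ : 1 ≤ ρ)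
    (S : Fin n → Finset E) (hS : G.IsState S)
    (heq : ∀ u : Fin n, ∀ s' ∈ G.strat u,
      G.pcost S u ≤ ρ * G.pcost (Function.update S u s') u) :
    ∀ u : Fin n, ∀ s' ∈ G.strat u,
      G.cost S u ≤ (Nat.factorial d : ℝ) * ρ * G.cost (Function.update S u s') u :=
  stmt13_general G ρ hρ S heq
end
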